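/- arXiv:1204.3115 — 4 statements merged into one kernel-verified Lean document; each statement's English description precedes it below -/
import Mathlib

section
/- Let W be a nonzero finite-dimensional vector space over F_2 equipped with a symmetric bilinear form B : W × W → F_2 that is non-degenerate. Then W admits an orthonormal basis for B (i.e., a basis E with B(e,e') = 1 if e = e' and B(e,e') = 0 if e ≠ e' for e, e' ∈ E) if and only if there exists an element x ∈ W with B(x,x) = 1. -/
private lemma zmod2_ne_zero : ∀ {a : ZMod 2}, a ≠ 0 → a = 1 := by decide
private lemma zmod2_ne_one : ∀ {a : ZMod 2}, a ≠ 1 → a = 0 := by decide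

/-- Key induction: any `n`-dimensional space with symmetric nondegenerate form having
a vector of norm one admits an orthonormal family of size `n`. -/
private lemma key : ∀ (n : ℕ) (W : Type) [AddCommGroup W] [Module (ZMod 2) W]
    [FiniteDimensional (ZMod 2) W] (B : LinearMap.BilinForm (ZMod 2) W),
    (∀ x y : W, B x y = B y x) → (∀ z : W, (∀ y : W, B z y = 0) → z = 0) →
    Module.finrank (ZMod 2) W = n → (n = 0 ∨ ∃ x : W, B x x = 1) →
    ∃ v : Fin n → W, ∀ i j, B (v i) (v j) = if i = j then 1 else 0 := by
  intro n
  induction n with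
  | zero =>
    intro W _ _ _ B _ _ _ _
    exact ⟨Fin.elim0, fun i => i.elim0⟩
  | succ n ih =>
    intro W _ _ _ B hsymm hnondeg hrank hx
    obtain ⟨x0, hx0⟩ : ∃ x : W, B x x = 1 := hx.resolve_left (Nat.succ_ne_zero n)
    -- Claim: we can pick x with B x x = 1 and (n = 0 or some y ⊥ x with B y y = 1)
    have C : ∃ x : W, B x x = 1 ∧ (n = 0 ∨ ∃ y : W, B x y = 0 ∧ B y y = 1) := by
      by_cases hn : n = 0
      · exact ⟨x0, hx0, Or.inl hn⟩
      by_cases hu : ∃ y : W, B x0 y = 0 ∧ B y y = 1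
      · exact ⟨x0, hx0, Or.inr hu⟩
      push_neg at hu
      have halt : ∀ y : W, B x0 y = 0 → B y y = 0 := fun y hy =>
        zmod2_ne_one (hu y hy)
      -- find nonzero u in x0^⊥
      have hUrank : Module.finrank (ZMod 2) (LinearMap.ker (B x0)) = n := by
        have hsurj : Function.Surjective (B x0) := fun c =>
          ⟨c • x0, by simp [hx0]⟩
        have h1 : LinearMap.range (B x0) = ⊤ := LinearMap.range_eq_top.mpr hsurj
        have h2 := LinearMap.finrank_range_add_finrank_ker (B x0)
        rw [h1, finrank_top, Module.finrank_self, hrank] at h2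
        omega
      have hUne : LinearMap.ker (B x0) ≠ ⊥ := by
        intro h
        rw [h, finrank_bot] at hUrank
        exact hn hUrank.symm
      obtain ⟨u, hu_mem, hu_ne⟩ := Submodule.exists_mem_ne_zero_of_ne_bot hUne
      have hux0 : B x0 u = 0 := LinearMap.mem_ker.mp hu_mem
      -- find w in x0^⊥ with B u w = 1
      have hw : ∃ w : W, B x0 w = 0 ∧ B u w = 1 := by
        by_contra hcon
        push_neg at hcon
        have hz : ∀ y : W, B u y = 0 := by
          intro y
          have hwmem : B x0 (y - B x0 y • x0) = 0 := by
            simp [hx0, mul_comm]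
          have h1 : B u (y - B x0 y • x0) = 0 :=
            zmod2_ne_one (hcon _ hwmem)
          have h2 : B u x0 = 0 := by rw [hsymm]; exact hux0
          have := h1
          rw [map_sub, map_smul] at this
          simpa [h2] using this
        exact hu_ne (hnondeg u hz)
      obtain ⟨w, hw1, hw2⟩ := hw
      refine ⟨x0 + u, ?_, Or.inr ⟨x0 + w, ?_, ?_⟩⟩
      · have h1 : B u x0 = 0 := by rw [hsymm]; exact hux0
        have h2 : B u u = 0 := halt u hux0
        simp [map_add, LinearMap.add_apply, hx0, hux0, h1, h2]
      · have h1 : B u x0 = 0 := by rw [hsymm]; exact hux0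
        simp [map_add, LinearMap.add_apply, hx0, hw1, h1, hw2]
        decide
      · have h2 : B w w = 0 := halt w hw1
        have h3 : B w x0 = 0 := by rw [hsymm]; exact hw1
        simp [map_add, LinearMap.add_apply, hx0, hw1, h2, h3]
    obtain ⟨x, hx1, hrest⟩ := C
    set U := LinearMap.ker (B x) with hU
    have hmemU : ∀ y : W, y ∈ U ↔ B x y = 0 := fun y => LinearMap.mem_ker
    have hUrank : Module.finrank (ZMod 2) U = n := by
      have hsurj : Function.Surjective (B x) := fun c => ⟨c • x, by simp [hx1]⟩
      have h1 : LinearMap.range (B x) = ⊤ := LinearMap.range_eq_top.mpr hsurj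
      have h2 := LinearMap.finrank_range_add_finrank_ker (B x)
      rw [h1, finrank_top, Module.finrank_self, hrank, ← hU] at h2
      omega
    set B' : LinearMap.BilinForm (ZMod 2) U := B.domRestrict₁₂ U U with hB'
    have hB'app : ∀ a b : U, B' a b = B (a : W) (b : W) := fun a b => rfl
    have hsymm' : ∀ a b : U, B' a b = B' b a := fun a b => hsymm _ _
    have hnondeg' : ∀ z : U, (∀ y : U, B' z y = 0) → z = 0 := by
      intro z hz
      have hzx : B (z : W) x = 0 := by
        rw [hsymm]; exact (hmemU _).mp z.2
      have hzero : ∀ y : W, B (z : W) y = 0 := by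
        intro y
        have hwmem : (y - B x y • x) ∈ U := by
          rw [hmemU]; simp [hx1, mul_comm]
        have h1 : B (z : W) (y - B x y • x) = 0 := hz ⟨_, hwmem⟩
        rw [map_sub, map_smul] at h1
        simpa [hzx] using h1
      exact Subtype.ext (hnondeg (z : W) hzero)
    have hx' : n = 0 ∨ ∃ a : U, B' a a = 1 := by
      rcases hrest with h | ⟨y, hy1, hy2⟩
      · exact Or.inl h
      · exact Or.inr ⟨⟨y, (hmemU y).mpr hy1⟩, hy2⟩
    obtain ⟨v', hv'⟩ := ih U B' hsymm' hnondeg' hUrank hx'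
    refine ⟨Fin.cons x (fun i => (v' i : W)), ?_⟩
    intro i j
    have hxv : ∀ k, B x ((v' k : W)) = 0 := fun k => (hmemU _).mp (v' k).2
    refine Fin.cases ?_ ?_ i
    · refine Fin.cases ?_ ?_ j
      · simpa using hx1
      · intro k
        simp [hxv k, (Fin.succ_ne_zero k).symm]
    · intro k
      refine Fin.cases ?_ ?_ j
      · have : B ((v' k : W)) x = 0 := by rw [hsymm]; exact hxv k
        simp [this, Fin.succ_ne_zero k]
      · intro l
        have := hv' k l
        rw [hB'app] at this
        simp only [Fin.cons_succ, this, Fin.succ_inj]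

/-- A nonzero finite-dimensional `F_2`-vector space with a symmetric non-degenerate
bilinear form admits an orthonormal basis iff some vector `x` has `B x x = 1`. -/
theorem stmt_0 (W : Type) [AddCommGroup W] [Module (ZMod 2) W]
    [FiniteDimensional (ZMod 2) W] [Nontrivial W]
    (B : LinearMap.BilinForm (ZMod 2) W)
    (hsymm : ∀ x y : W, B x y = B y x)
    (hnondeg : Function.Injective fun x : W => B x) :
    (∃ (ι : Type) (_ : Fintype ι) (_ : DecidableEq ι) (b : Module.Basis ι (ZMod 2) W),
        ∀ i j : ι, B (b i) (b j) = if i = j then 1 else 0) ↔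
      ∃ x : W, B x x = 1 := by
  constructor
  · rintro ⟨ι, _, _, b, hb⟩
    obtain ⟨i⟩ := b.index_nonempty
    exact ⟨b i, by simpa using hb i i⟩
  · rintro ⟨x, hx⟩
    have hnd : ∀ z : W, (∀ y : W, B z y = 0) → z = 0 := by
      intro z hz
      have : B z = B 0 := by ext y; simp [hz y]
      exact hnondeg this
    obtain ⟨v, hv⟩ := key (Module.finrank (ZMod 2) W) W B hsymm hnd rfl
      (Or.inr ⟨x, hx⟩)
    have li : LinearIndependent (ZMod 2) v := by
      rw [Fintype.linearIndependent_iff]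
      intro g hg j
      have := congrArg (fun w => B w (v j)) hg
      simp only [map_sum, map_smul, LinearMap.sum_apply, LinearMap.smul_apply,
        map_zero, LinearMap.zero_apply, smul_eq_mul] at this
      simp only [hv, mul_ite, mul_one, mul_zero, Finset.sum_ite_eq',
        Finset.mem_univ, if_true] at this
      exact this
    haveI : Nonempty (Fin (Module.finrank (ZMod 2) W)) := by
      have : 0 < Module.finrank (ZMod 2) W := Module.finrank_pos
      exact ⟨⟨0, this⟩⟩
    let b := basisOfLinearIndependentOfCardEqFinrank li (by simp)
    refine ⟨Fin (Module.finrank (ZMod 2) W), inferInstance, inferInstance, b, ?_⟩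
    intro i j
    have hb : ⇑b = v := coe_basisOfLinearIndependentOfCardEqFinrank li (by simp)
    rw [hb]
    exact hv i j
end

section
/- Let n ≥ 1. Every F_2-linear map f : F_2^n → F_2^n satisfying ⟨f(x), f(y)⟩ = ⟨x, y⟩ for all x, y (where ⟨x,y⟩ = Σ_i x_i y_i is the standard bilinear form) is induced by a permutation of the n coordinates (i.e., there is a permutation σ of {1,…,n} with f(e_i) = e_{σ(i)} for all standard basis vectors e_i) if and only if n ≤ 3. -/
set_option maxRecDepth 100000

private lemma keylem (n : ℕ) (hn : n ≤ 3) :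
    ∀ v : Fin n → Fin n → ZMod 2,
    (∀ i j, ∑ k, v i k * v j k
        = ∑ k, (Pi.single i 1 : Fin n → ZMod 2) k * (Pi.single j 1 : Fin n → ZMod 2) k) →
    ∃ σ : Equiv.Perm (Fin n), ∀ i, v i = Pi.single (σ i) 1 := by
  interval_cases n <;> decide

private lemma dot_single (n : ℕ) (j : Fin n) (x : Fin n → ZMod 2) :
    ∑ i, x i * (Pi.single j 1 : Fin n → ZMod 2) i = x j := by
  rw [Finset.sum_eq_single j]
  · simp
  · intro b _ hb; simp [Pi.single_eq_of_ne hb]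
  · simp

private lemma add_self' (a : ZMod 2) : a + a = 0 := by revert a; decide

/-- For `n ≥ 1`, every `F_2`-linear endomorphism of `F_2^n` preserving the standard
bilinear form is induced by a permutation of the coordinates iff `n ≤ 3`. -/
theorem stmt_9 (n : ℕ) (hn : 1 ≤ n) :
    (∀ f : (Fin n → ZMod 2) →ₗ[ZMod 2] (Fin n → ZMod 2),
        (∀ x y : Fin n → ZMod 2, ∑ i, f x i * f y i = ∑ i, x i * y i) →
        ∃ σ : Equiv.Perm (Fin n),
          ∀ i : Fin n, f (Pi.single i 1) = Pi.single (σ i) 1) ↔ n ≤ 3 := by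
  constructor
  · intro H
    by_contra hlt
    push_neg at hlt
    have h4 : 4 ≤ n := hlt
    obtain ⟨i0, i1, i2, i3, ne01, ne02, ne03, ne12, ne13, ne23⟩ :
        ∃ i0 i1 i2 i3 : Fin n, i0 ≠ i1 ∧ i0 ≠ i2 ∧ i0 ≠ i3 ∧ i1 ≠ i2 ∧ i1 ≠ i3 ∧ i2 ≠ i3 :=
      ⟨⟨0, by omega⟩, ⟨1, by omega⟩, ⟨2, by omega⟩, ⟨3, by omega⟩,
        by simp [Fin.ext_iff], by simp [Fin.ext_iff], by simp [Fin.ext_iff],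
        by simp [Fin.ext_iff], by simp [Fin.ext_iff], by simp [Fin.ext_iff]⟩
    obtain ⟨w, hw0, hw1, hw2, hw3, hdotw⟩ :
        ∃ w : Fin n → ZMod 2, w i0 = 1 ∧ w i1 = 1 ∧ w i2 = 1 ∧ w i3 = 1 ∧
          ∀ x : Fin n → ZMod 2, ∑ i, x i * w i = x i0 + x i1 + x i2 + x i3 := by
      refine ⟨Pi.single i0 1 + Pi.single i1 1 + Pi.single i2 1 + Pi.single i3 1,
        ?_, ?_, ?_, ?_, ?_⟩
      · simp [Pi.single_eq_of_ne ne01, Pi.single_eq_of_ne ne02, Pi.single_eq_of_ne ne03]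
      · simp [Pi.single_eq_of_ne (Ne.symm ne01), Pi.single_eq_of_ne ne12,
          Pi.single_eq_of_ne ne13]
      · simp [Pi.single_eq_of_ne (Ne.symm ne02), Pi.single_eq_of_ne (Ne.symm ne12),
          Pi.single_eq_of_ne ne23]
      · simp [Pi.single_eq_of_ne (Ne.symm ne03), Pi.single_eq_of_ne (Ne.symm ne13),
          Pi.single_eq_of_ne (Ne.symm ne23)]
      · intro x
        simp only [Pi.add_apply, mul_add, Finset.sum_add_distrib, dot_single]
    obtain ⟨s, hsapp⟩ :
        ∃ s : (Fin n → ZMod 2) →ₗ[ZMod 2] ZMod 2,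
          ∀ x : Fin n → ZMod 2, s x = x i0 + x i1 + x i2 + x i3 :=
      ⟨(LinearMap.proj i0 : (Fin n → ZMod 2) →ₗ[ZMod 2] ZMod 2) + LinearMap.proj i1
        + LinearMap.proj i2 + LinearMap.proj i3, fun x => by simp⟩
    obtain ⟨f, hfapp⟩ :
        ∃ f : (Fin n → ZMod 2) →ₗ[ZMod 2] (Fin n → ZMod 2),
          ∀ (x : Fin n → ZMod 2) (i : Fin n), f x i = x i + s x * w i :=
      ⟨LinearMap.id + s.smulRight w, fun x i => by simp [smul_eq_mul]⟩
    have hdotw' : ∀ x : Fin n → ZMod 2, ∑ i, x i * w i = s x := by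
      intro x; rw [hdotw, hsapp]
    have hsw : s w = 0 := by
      rw [hsapp, hw0, hw1, hw2, hw3]; decide
    have horth : ∀ x y : Fin n → ZMod 2, ∑ i, f x i * f y i = ∑ i, x i * y i := by
      intro x y
      have expand : ∀ i, f x i * f y i
          = x i * y i + (s y * (x i * w i) + (s x * (y i * w i) + s x * s y * (w i * w i))) := by
        intro i; rw [hfapp, hfapp]; ring
      have hsq : ∀ i, w i * w i = w i := by
        intro i; have h2 : ∀ a : ZMod 2, a * a = a := by decide
        exact h2 _
      have hconst : ∀ c : ZMod 2, s (fun _ => c) = 0 := by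
        intro c; rw [hsapp]; rw [add_self', zero_add, add_self']
      simp only [expand, hsq, Finset.sum_add_distrib, ← Finset.mul_sum, hdotw', hsw,
        mul_zero, add_zero]
      simp only [hconst, add_zero]
      rw [mul_comm (s y) (s x), add_self', add_zero]
    obtain ⟨σ, hσ⟩ := H f horth
    have h0 := hσ i0
    have hs1 : s (Pi.single i0 1) = 1 := by
      rw [hsapp]
      simp [Pi.single_eq_of_ne (Ne.symm ne01), Pi.single_eq_of_ne (Ne.symm ne02),
        Pi.single_eq_of_ne (Ne.symm ne03)]
    have e1 := congrFun h0 i1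
    have e2 := congrFun h0 i2
    rw [hfapp, hs1, one_mul, hw1, Pi.single_eq_of_ne (Ne.symm ne01)] at e1
    rw [hfapp, hs1, one_mul, hw2, Pi.single_eq_of_ne (Ne.symm ne02)] at e2
    simp only [zero_add] at e1 e2
    have j1 : σ i0 = i1 := by
      by_contra hne
      rw [Pi.single_eq_of_ne (Ne.symm hne)] at e1
      exact one_ne_zero e1
    have j2 : σ i0 = i2 := by
      by_contra hne
      rw [Pi.single_eq_of_ne (Ne.symm hne)] at e2
      exact one_ne_zero e2
    exact ne12 (j1 ▸ j2)
  · intro h3 f hf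
    exact keylem n h3 (fun i => f (Pi.single i 1)) (fun i j => hf _ _)
end

section
/- Let n ≥ 2 and let M be an n × 2n matrix over F_2 whose associated block matrix is half-boxed. If the rows of M are pairwise orthogonal with respect to the standard bilinear form ⟨x,y⟩ = Σ_i x_i y_i on F_2^{2n}, then the block matrix of M is boxed, i.e., condition (5) holds automatically. -/
/-- The `(i,j)` block (a pair in `F_2²`) of an `n × 2n` matrix over `F_2`:
`b i j = (M i (2j), M i (2j+1))` (0-indexed), corresponding to
`(M_{i,2j−1}, M_{i,2j})` in 1-indexed notation. -/
def blockOf {n : ℕ} (M : Matrix (Fin n) (Fin (2 * n)) (ZMod 2)) (i j : Fin n) :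
    ZMod 2 × ZMod 2 :=
  (M i ⟨2 * j.val, by have := j.isLt; omega⟩,
   M i ⟨2 * j.val + 1, by have := j.isLt; omega⟩)

/-- The block matrix of `M` is half-boxed: (1) the bottom row consists of `(1,1)` pairs;
(2) the last column consists of `(1,0)` pairs except in the bottom row;
(3) the diagonal entries are `(0,1)` except in the bottom row;
(4) all other blocks are identical pairs `(0,0)` or `(1,1)`. -/
def IsHalfBoxed {n : ℕ} (M : Matrix (Fin n) (Fin (2 * n)) (ZMod 2)) : Prop :=
  (∀ i j : Fin n, i.val = n - 1 → blockOf M i j = (1, 1)) ∧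
  (∀ i j : Fin n, i.val < n - 1 → j.val = n - 1 → blockOf M i j = (1, 0)) ∧
  (∀ i : Fin n, i.val < n - 1 → blockOf M i i = (0, 1)) ∧
  (∀ i j : Fin n, i.val < n - 1 → j.val < n - 1 → i ≠ j →
    blockOf M i j = (0, 0) ∨ blockOf M i j = (1, 1))

/-- The block matrix of `M` is boxed: it is half-boxed and moreover
(5) `b i j + b j i = (1,1)` for all `j < i` below the bottom row. -/
def IsBoxed {n : ℕ} (M : Matrix (Fin n) (Fin (2 * n)) (ZMod 2)) : Prop :=
  IsHalfBoxed M ∧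
  ∀ i j : Fin n, j.val < i.val → i.val < n - 1 →
    blockOf M i j + blockOf M j i = (1, 1)

lemma sum_range_two_mul {R : Type*} [AddCommMonoid R] (n : ℕ) (f : ℕ → R) :
    ∑ k ∈ Finset.range (2*n), f k = ∑ k ∈ Finset.range n, (f (2*k) + f (2*k+1)) := by
  induction n with
  | zero => simp
  | succ m ih =>
    have h2 : 2*(m+1) = (2*m+1)+1 := by ring
    rw [Finset.sum_range_succ, ← ih, h2, Finset.sum_range_succ, Finset.sum_range_succ,
      add_assoc]


/-- If the block matrix of `M` is half-boxed and the rows of `M` are pairwise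
orthogonal for the standard bilinear form, then the block matrix of `M` is boxed. -/
theorem stmt_10 (n : ℕ) (hn : 2 ≤ n) (M : Matrix (Fin n) (Fin (2 * n)) (ZMod 2))
    (hhb : IsHalfBoxed M)
    (horth : ∀ i j : Fin n, i ≠ j → ∑ k, M i k * M j k = 0) :
    IsBoxed M := by
  obtain ⟨h1, h2, h3, h4⟩ := hhb
  refine ⟨⟨h1, h2, h3, h4⟩, ?_⟩
  intro I J hJI hI
  have hJ : J.val < n - 1 := hJI.trans hI
  have hIn : I.val < n := by omega
  have hJn : J.val < n := by omega
  have hne : I ≠ J := fun h => by simp [h] at hJI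
  set g : ℕ → ZMod 2 :=
    fun k => if h : k < 2*n then M I ⟨k, h⟩ * M J ⟨k, h⟩ else 0 with hgdef
  have hgval : ∀ k (h : k < 2*n), g k = M I ⟨k, h⟩ * M J ⟨k, h⟩ := by
    intro k h; simp only [hgdef]; rw [dif_pos h]
  have hsum0 : ∑ k ∈ Finset.range n, (g (2*k) + g (2*k+1)) = 0 := by
    rw [← sum_range_two_mul, ← Fin.sum_univ_eq_sum_range g (2*n), ← horth I J hne]
    apply Finset.sum_congr rfl
    intro k _
    rw [hgval k.val k.isLt]
  -- general vanishing
  have hzero : ∀ k ∈ Finset.range n, k ∉ ({J.val, I.val, n-1} : Finset ℕ) →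
      g (2*k) + g (2*k+1) = 0 := by
    intro k hk hk'
    simp only [Finset.mem_range] at hk
    simp only [Finset.mem_insert, Finset.mem_singleton, not_or] at hk'
    obtain ⟨hkJ, hkI, hkN⟩ := hk'
    have hklt : k < n - 1 := by omega
    set K : Fin n := ⟨k, hk⟩ with hK
    have hIK := h4 I K hI hklt (fun h => hkI (by rw [h]))
    have hJK := h4 J K hJ hklt (fun h => hkJ (by rw [h]))
    have e1 : (blockOf M I K).1 = (blockOf M I K).2 := by rcases hIK with h | h <;> rw [h]
    have e2 : (blockOf M J K).1 = (blockOf M J K).2 := by rcases hJK with h | h <;> rw [h]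
    have e1' : M I (⟨2*k, by omega⟩ : Fin (2*n)) = M I ⟨2*k+1, by omega⟩ := e1
    have e2' : M J (⟨2*k, by omega⟩ : Fin (2*n)) = M J ⟨2*k+1, by omega⟩ := e2
    rw [hgval (2*k) (by omega), hgval (2*k+1) (by omega), ← e1', ← e2']
    exact CharTwo.add_self_eq_zero _
  have hsub : ({J.val, I.val, n-1} : Finset ℕ) ⊆ Finset.range n := by
    intro k hk
    simp only [Finset.mem_insert, Finset.mem_singleton] at hk
    simp only [Finset.mem_range]
    omega
  have hsplit : ∑ k ∈ ({J.val, I.val, n-1} : Finset ℕ), (g (2*k) + g (2*k+1)) = 0 := by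
    rw [Finset.sum_subset hsub hzero]; exact hsum0
  have hJI' : J.val ≠ I.val := by omega
  have hJN : J.val ≠ n - 1 := by omega
  have hIN : I.val ≠ n - 1 := by omega
  rw [Finset.sum_insert (by simp [hJI', hJN]),
    Finset.sum_insert (by simp [hIN]), Finset.sum_singleton] at hsplit
  -- entry values
  have aI := h3 I hI
  have aJ := h3 J hJ
  have aI1 : M I (⟨2*I.val, by omega⟩ : Fin (2*n)) = 0 := congrArg Prod.fst aI
  have aI2 : M I (⟨2*I.val+1, by omega⟩ : Fin (2*n)) = 1 := congrArg Prod.snd aI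
  have aJ1 : M J (⟨2*J.val, by omega⟩ : Fin (2*n)) = 0 := congrArg Prod.fst aJ
  have aJ2 : M J (⟨2*J.val+1, by omega⟩ : Fin (2*n)) = 1 := congrArg Prod.snd aJ
  have bI := h2 I ⟨n-1, by omega⟩ hI rfl
  have bJ := h2 J ⟨n-1, by omega⟩ hJ rfl
  have bI1 : M I (⟨2*(n-1), by omega⟩ : Fin (2*n)) = 1 := congrArg Prod.fst bI
  have bI2 : M I (⟨2*(n-1)+1, by omega⟩ : Fin (2*n)) = 0 := congrArg Prod.snd bI
  have bJ1 : M J (⟨2*(n-1), by omega⟩ : Fin (2*n)) = 1 := congrArg Prod.fst bJ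
  have bJ2 : M J (⟨2*(n-1)+1, by omega⟩ : Fin (2*n)) = 0 := congrArg Prod.snd bJ
  have hbIJ := h4 I J hI hJ hne
  have hbJI := h4 J I hJ hI hne.symm
  have cIJ : (blockOf M I J).1 = (blockOf M I J).2 := by rcases hbIJ with h | h <;> rw [h]
  have cJI : (blockOf M J I).1 = (blockOf M J I).2 := by rcases hbJI with h | h <;> rw [h]
  have cIJ' : M I (⟨2*J.val, by omega⟩ : Fin (2*n)) = M I ⟨2*J.val+1, by omega⟩ := cIJ
  have cJI' : M J (⟨2*I.val, by omega⟩ : Fin (2*n)) = M J ⟨2*I.val+1, by omega⟩ := cJI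
  rw [hgval (2*J.val) (by omega), hgval (2*J.val+1) (by omega),
    hgval (2*I.val) (by omega), hgval (2*I.val+1) (by omega),
    hgval (2*(n-1)) (by omega), hgval (2*(n-1)+1) (by omega),
    aJ1, aJ2, aI1, aI2, bI1, bI2, bJ1, bJ2, ← cIJ', ← cJI'] at hsplit
  have key : M I (⟨2*J.val, by omega⟩ : Fin (2*n)) + M J (⟨2*I.val, by omega⟩ : Fin (2*n)) = 1 := by
    have h01 : ∀ x y : ZMod 2, x * 0 + x * 1 + (0 * y + 1 * y + (1 * 1 + 0 * 0)) = 0 →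
        x + y = 1 := by decide
    exact h01 _ _ hsplit
  rcases hbIJ with hIJ | hIJ <;> rcases hbJI with hJI2 | hJI2
  · exfalso
    have e1 : M I (⟨2*J.val, by omega⟩ : Fin (2*n)) = 0 := congrArg Prod.fst hIJ
    have e2 : M J (⟨2*I.val, by omega⟩ : Fin (2*n)) = 0 := congrArg Prod.fst hJI2
    rw [e1, e2] at key
    exact absurd key (by decide)
  · rw [hIJ, hJI2]; decide
  · rw [hIJ, hJI2]; decide
  · exfalso
    have e1 : M I (⟨2*J.val, by omega⟩ : Fin (2*n)) = 1 := congrArg Prod.fst hIJ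
    have e2 : M J (⟨2*I.val, by omega⟩ : Fin (2*n)) = 1 := congrArg Prod.fst hJI2
    rw [e1, e2] at key
    exact absurd key (by decide)
end

section
/- Let n ≥ 2 and let M be an n × 2n matrix over F_2 whose associated block matrix is boxed. Then the rows of M are linearly independent over F_2, and the row space of M is a self-dual code of length 2n (hence of dimension n). -/
lemma zmod2_sq (x : ZMod 2) : x * x = x := by revert x; decide

lemma sum_double {n : ℕ} {β : Type*} [AddCommMonoid β] (f : Fin (2*n) → β) :
    ∑ k, f k = ∑ t : Fin n,
      (f ⟨2*t.val, by have := t.isLt; omega⟩ + f ⟨2*t.val+1, by have := t.isLt; omega⟩) := by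
  have hbij : Function.Bijective
      (fun p : Fin n × Fin 2 => (⟨2*p.1.val + p.2.val, by
        have := p.1.isLt; have := p.2.isLt; omega⟩ : Fin (2*n))) := by
    rw [Fintype.bijective_iff_injective_and_card]
    constructor
    · rintro ⟨a,b⟩ ⟨c,d⟩ h
      have h' : 2*a.val + b.val = 2*c.val + d.val := congrArg Fin.val h
      have hb := b.isLt; have hd := d.isLt
      have : a.val = c.val ∧ b.val = d.val := by omega
      exact Prod.ext (Fin.ext this.1) (Fin.ext this.2)
    · simp [mul_comm]
  rw [← Fintype.sum_bijective _ hbij _ f (fun _ => rfl)]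
  rw [Fintype.sum_prod_type]
  refine Finset.sum_congr rfl fun t _ => ?_
  rw [Fin.sum_univ_two]
  congr 1

lemma rowAbsSum {n : ℕ} (hn : 2 ≤ n) (M : Matrix (Fin n) (Fin (2 * n)) (ZMod 2))
    (h1 : ∀ i j : Fin n, i.val = n - 1 → blockOf M i j = (1, 1))
    (h2 : ∀ i j : Fin n, i.val < n - 1 → j.val = n - 1 → blockOf M i j = (1, 0))
    (h3 : ∀ i : Fin n, i.val < n - 1 → blockOf M i i = (0, 1))
    (h4 : ∀ i j : Fin n, i.val < n - 1 → j.val < n - 1 → i ≠ j →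
      blockOf M i j = (0, 0) ∨ blockOf M i j = (1, 1))
    (i : Fin n) :
    ∑ t : Fin n, ((blockOf M i t).1 + (blockOf M i t).2) = 0 := by
  by_cases hi : i.val = n - 1
  · have hz : ∀ t, (blockOf M i t).1 + (blockOf M i t).2 = 0 := fun t => by
      rw [h1 i t hi]; decide
    simp [hz]
  · have hi' : i.val < n - 1 := by have := i.isLt; omega
    set L : Fin n := ⟨n - 1, by omega⟩ with hL
    have hiL : i ≠ L := by
      intro h
      exact hi (by rw [h])
    have key : ∀ t : Fin n, (blockOf M i t).1 + (blockOf M i t).2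
        = (if t = i then (1 : ZMod 2) else 0) + (if t = L then 1 else 0) := by
      intro t
      by_cases hti : t = i
      · subst hti
        rw [h3 t hi']
        simp [hiL]
      · by_cases htL : t = L
        · rw [h2 i t hi' (by rw [htL])]
          rw [if_neg hti, if_pos htL]
          decide
        · have htlt : t.val < n - 1 := by
            have := t.isLt
            have : t.val ≠ n - 1 := fun h => htL (Fin.ext h)
            omega
          rcases h4 i t hi' htlt (fun h => hti h.symm) with h | h <;>
            · rw [h, if_neg hti, if_neg htL]; try decide
    rw [Finset.sum_congr rfl (fun t _ => key t), Finset.sum_add_distrib]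
    simp
    decide

lemma rows_orth {n : ℕ} (hn : 2 ≤ n) (M : Matrix (Fin n) (Fin (2 * n)) (ZMod 2))
    (hM : IsBoxed M) (i j : Fin n) : ∑ k, M i k * M j k = 0 := by
  obtain ⟨⟨h1, h2, h3, h4⟩, h5⟩ := hM
  rw [sum_double (fun k => M i k * M j k)]
  have hconv : ∀ t : Fin n,
      M i (⟨2*t.val, by have := t.isLt; omega⟩ : Fin (2*n)) *
        M j ⟨2*t.val, by have := t.isLt; omega⟩ +
      M i (⟨2*t.val+1, by have := t.isLt; omega⟩ : Fin (2*n)) *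
        M j ⟨2*t.val+1, by have := t.isLt; omega⟩
      = (blockOf M i t).1 * (blockOf M j t).1 + (blockOf M i t).2 * (blockOf M j t).2 :=
    fun t => rfl
  rw [Finset.sum_congr rfl (fun t _ => hconv t)]
  by_cases hi : i.val = n - 1
  · have : ∀ t : Fin n, (blockOf M i t).1 * (blockOf M j t).1
        + (blockOf M i t).2 * (blockOf M j t).2
        = (blockOf M j t).1 + (blockOf M j t).2 := fun t => by
      rw [h1 i t hi]; ring
    rw [Finset.sum_congr rfl (fun t _ => this t)]
    exact rowAbsSum hn M h1 h2 h3 h4 j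
  · have hi' : i.val < n - 1 := by have := i.isLt; omega
    by_cases hj : j.val = n - 1
    · have : ∀ t : Fin n, (blockOf M i t).1 * (blockOf M j t).1
          + (blockOf M i t).2 * (blockOf M j t).2
          = (blockOf M i t).1 + (blockOf M i t).2 := fun t => by
        rw [h1 j t hj]; ring
      rw [Finset.sum_congr rfl (fun t _ => this t)]
      exact rowAbsSum hn M h1 h2 h3 h4 i
    · have hj' : j.val < n - 1 := by have := j.isLt; omega
      by_cases hij : i = j
      · subst hij
        have : ∀ t : Fin n, (blockOf M i t).1 * (blockOf M i t).1
            + (blockOf M i t).2 * (blockOf M i t).2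
            = (blockOf M i t).1 + (blockOf M i t).2 := fun t => by
          rw [zmod2_sq, zmod2_sq]
        rw [Finset.sum_congr rfl (fun t _ => this t)]
        exact rowAbsSum hn M h1 h2 h3 h4 i
      · -- off-diagonal case
        set L : Fin n := ⟨n - 1, by omega⟩ with hL
        have hiL : i ≠ L := fun h => hi (by rw [h])
        have hjL : j ≠ L := fun h => hj (by rw [h])
        have key : ∀ t : Fin n, (blockOf M i t).1 * (blockOf M j t).1
            + (blockOf M i t).2 * (blockOf M j t).2
            = (if t = i then (blockOf M j i).2 else 0)
              + ((if t = j then (blockOf M i j).2 else 0) + (if t = L then 1 else 0)) := by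
          intro t
          by_cases hti : t = i
          · subst hti
            rw [h3 t hi', if_pos rfl, if_neg hij, if_neg hiL]
            simp
          · by_cases htj : t = j
            · subst htj
              rw [h3 t hj', if_neg (fun h => hij h.symm), if_pos rfl, if_neg hjL]
              simp
            · by_cases htL : t = L
              · rw [h2 i t hi' (by rw [htL]), h2 j t hj' (by rw [htL]),
                  if_neg hti, if_neg htj, if_pos htL]
                decide
              · have htlt : t.val < n - 1 := by
                  have := t.isLt
                  have : t.val ≠ n - 1 := fun h => htL (Fin.ext h)
                  omega
                rw [if_neg hti, if_neg htj, if_neg htL]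
                rcases h4 i t hi' htlt (fun h => hti h.symm) with h | h <;>
                  rcases h4 j t hj' htlt (fun h => htj h.symm) with h' | h' <;>
                    · rw [h, h']; try decide
        rw [Finset.sum_congr rfl (fun t _ => key t), Finset.sum_add_distrib,
          Finset.sum_add_distrib]
        simp only [Finset.sum_ite_eq', Finset.mem_univ, if_pos]
        have h52 : (blockOf M j i).2 + (blockOf M i j).2 = 1 := by
          rcases Nat.lt_or_ge i.val j.val with hlt | hge
          · have := congrArg Prod.snd (h5 j i hlt hj')
            simpa [add_comm] using this
          · have hlt : j.val < i.val :=
              lt_of_le_of_ne hge (fun h => hij (Fin.ext h.symm))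
            have := congrArg Prod.snd (h5 i j hlt hi')
            simpa [add_comm] using this
        rw [← add_assoc, h52]
        decide

lemma zmod2_add_self (x : ZMod 2) : x + x = 0 := by revert x; decide

lemma rows_indep {n : ℕ} (hn : 2 ≤ n) (M : Matrix (Fin n) (Fin (2 * n)) (ZMod 2))
    (hM : IsBoxed M) : LinearIndependent (ZMod 2) (fun i : Fin n => M i) := by
  obtain ⟨⟨h1, h2, h3, h4⟩, h5⟩ := hM
  rw [Fintype.linearIndependent_iff]
  intro g hg
  have hgk : ∀ k : Fin (2 * n), ∑ i, g i * M i k = 0 := by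
    intro k
    have := congrFun hg k
    simpa [Finset.sum_apply] using this
  have hlt : ∀ t : Fin n, t.val < n - 1 → g t = 0 := by
    intro t ht
    have e0 : ∑ i, g i * (blockOf M i t).1 = 0 := hgk ⟨2 * t.val, by have := t.isLt; omega⟩
    have e1 : ∑ i, g i * (blockOf M i t).2 = 0 := hgk ⟨2 * t.val + 1, by have := t.isLt; omega⟩
    have key : ∀ i : Fin n, g i * (blockOf M i t).1 + g i * (blockOf M i t).2
        = if i = t then g t else 0 := by
      intro i
      by_cases hit : i = t
      · subst hit
        rw [h3 i ht, if_pos rfl]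
        simp
      · rw [if_neg hit]
        by_cases hi : i.val = n - 1
        · rw [h1 i t hi]
          simp only [mul_one]
          exact zmod2_add_self _
        · have hi' : i.val < n - 1 := by have := i.isLt; omega
          rcases h4 i t hi' ht hit with h | h <;>
            · rw [h]
              simp only [mul_one, mul_zero, add_zero]
              all_goals exact zmod2_add_self _
    have hsum : (∑ i, if i = t then g t else 0) = 0 := by
      rw [Finset.sum_congr rfl (fun i _ => (key i).symm), Finset.sum_add_distrib, e0, e1,
        add_zero]
    simpa [Finset.sum_ite_eq'] using hsum
  intro i
  by_cases hi : i.val < n - 1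
  · exact hlt i hi
  · have hi' : i.val = n - 1 := by have := i.isLt; omega
    have e := hgk ⟨0, by omega⟩
    have hsingle : ∑ i', g i' * M i' ⟨0, by omega⟩ = g i * M i ⟨0, by omega⟩ := by
      refine Finset.sum_eq_single i (fun b _ hb => ?_) (fun h => absurd (Finset.mem_univ i) h)
      have hb' : b.val < n - 1 := by
        have := b.isLt
        have : b.val ≠ n - 1 := fun h => hb (by apply Fin.ext; rw [h, hi'])
        omega
      rw [hlt b hb', zero_mul]
    have hM0 : M i (⟨0, by omega⟩ : Fin (2 * n)) = 1 :=
      congrArg Prod.fst (h1 i ⟨0, by omega⟩ hi')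
    rw [hsingle, hM0, mul_one] at e
    exact e

/-- The rows of a matrix with boxed block matrix are linearly independent, and their
span is a self-dual code of length `2n`. -/
theorem stmt_12 (n : ℕ) (hn : 2 ≤ n) (M : Matrix (Fin n) (Fin (2 * n)) (ZMod 2))
    (hM : IsBoxed M) :
    LinearIndependent (ZMod 2) (fun i : Fin n => M i) ∧
    (∀ y : Fin (2 * n) → ZMod 2,
      y ∈ Submodule.span (ZMod 2) (Set.range fun i : Fin n => M i) ↔
        ∀ x ∈ Submodule.span (ZMod 2) (Set.range fun i : Fin n => M i),
          ∑ k, x k * y k = 0) := by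
  have hind := rows_indep hn M hM
  refine ⟨hind, ?_⟩
  set V := Submodule.span (ZMod 2) (Set.range fun i : Fin n => M i) with hV
  have hle : V ≤ LinearMap.ker (Matrix.mulVecLin M) := by
    rw [hV, Submodule.span_le]
    rintro _ ⟨j, rfl⟩
    simp only [SetLike.mem_coe, LinearMap.mem_ker]
    funext i
    simpa [Matrix.mulVecLin_apply, Matrix.mulVec, dotProduct] using
      rows_orth hn M hM i j
  have hdim1 : Module.finrank (ZMod 2) V = n := by
    simpa using finrank_span_eq_card hind
  have hrank : M.rank = n := by
    rw [← Matrix.rank_transpose, Matrix.rank, Matrix.mulVecLin_transpose,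
      range_vecMulLinear]
    exact hdim1
  have hker : Module.finrank (ZMod 2) (LinearMap.ker M.mulVecLin) = n := by
    have h2n := LinearMap.finrank_range_add_finrank_ker M.mulVecLin
    rw [Module.finrank_fin_fun] at h2n
    have : Module.finrank (ZMod 2) (LinearMap.range M.mulVecLin) = n := hrank
    omega
  have hVK : V = LinearMap.ker (Matrix.mulVecLin M) :=
    Submodule.eq_of_le_of_finrank_le hle (le_of_eq (hker.trans hdim1.symm))
  intro y
  constructor
  · intro hy x hx
    let φ : (Fin (2 * n) → ZMod 2) →ₗ[ZMod 2] ZMod 2 :=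
      { toFun := fun x => ∑ k, x k * y k,
        map_add' := by intro a b; simp [add_mul, Finset.sum_add_distrib],
        map_smul' := by intro c a; simp [Finset.mul_sum, mul_assoc] }
    have hkerφ : V ≤ LinearMap.ker φ := by
      rw [hV, Submodule.span_le]
      rintro _ ⟨j, rfl⟩
      simp only [SetLike.mem_coe, LinearMap.mem_ker]
      have hy' : M.mulVecLin y = 0 := by rw [hVK] at hy; exact hy
      have := congrFun hy' j
      simpa [φ, Matrix.mulVecLin_apply, Matrix.mulVec, dotProduct] using this
    have := hkerφ hx
    simpa [φ] using this
  · intro h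
    rw [hVK, LinearMap.mem_ker]
    funext i
    have := h (M i) (Submodule.subset_span ⟨i, rfl⟩)
    simpa [Matrix.mulVecLin_apply, Matrix.mulVec, dotProduct] using this
end
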